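/- Let (D, ⊢, ⊣) be a dialgebra. Then the bracket [x, y] := x ⊣ y - y ⊢ x makes D into a (right) Leibniz algebra, i.e., [[x,y],z] = [[x,z],y] + [x,[y,z]] holds for all x, y, z ∈ D. -/
import Mathlib


/-- In a dialgebra `(D, ⊢, ⊣)` (here `vd = ⊢`, `dv = ⊣`), the
bracket `[x,y] := x ⊣ y - y ⊢ x` satisfies the right Leibniz identity. -/
theorem leibniz_of_dialgebra {k D : Type*} [Field k]
    [AddCommGroup D] [Module k D]
    (vd dv : D →ₗ[k] D →ₗ[k] D)
    (hvd : ∀ x y z : D, vd (vd x y) z = vd x (vd y z))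
    (hdv : ∀ x y z : D, dv (dv x y) z = dv x (dv y z))
    (h1 : ∀ x y z : D, dv x (vd y z) = dv x (dv y z))
    (h2 : ∀ x y z : D, dv (vd x y) z = vd x (dv y z))
    (h3 : ∀ x y z : D, vd (dv x y) z = vd (vd x y) z) :
    let b : D → D → D := fun x y => dv x y - vd y x
    ∀ x y z : D, b (b x y) z = b (b x z) y + b x (b y z) := by
  intro b x y z
  simp only [b, map_sub, LinearMap.sub_apply, h1, h2, h3, hvd, hdv]
  abel
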